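/- Let ℓ > 3 and p > 3 be distinct primes, and let A, B ∈ ℤ_ℓ be such that 4A^3 + 27B^2 is a unit of ℤ_ℓ. Then there exist a, b ∈ ℤ_ℓ and units c, u of ℤ_ℓ such that a^2 + b^3 = c^p, and such that 2a ≡ −B·u^6 (mod ℓ) and 3b ≡ A·u^4 (mod ℓ). -/

import Mathlib

/-!
Put `a = -B u⁶ / 2` and `b = A u⁴ / 3`; then `a² + b³ = u¹² (4A³ + 27B²) / 108` exactly, so the
congruences hold on the nose and it remains to make `u¹² V` a `p`-th power for the unit
`V = (4A³ + 27B²) / 108`. Since `p` is prime to `12`, a Bézout relation `12 m + p n = 1` gives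
`(Vⁿ)ᵖ = (V⁻ᵐ)¹² V`.
-/

theorem exists_pow_eq_pow_mul {G : Type*} [CommGroup G] {k p : ℕ} (hkp : k.Coprime p) (v : G) :
    ∃ u c : G, c ^ p = u ^ k * v := by
  refine ⟨v ^ (-k.gcdA p), v ^ k.gcdB p, ?_⟩
  have hbezout : (1 : ℤ) = k * k.gcdA p + p * k.gcdB p := by
    simpa [hkp.gcd_eq_one] using Nat.gcd_eq_gcd_ab k p
  rw [← zpow_natCast, ← zpow_natCast, ← zpow_mul, ← zpow_mul, ← zpow_add_one,
    show k.gcdB p * p = -k.gcdA p * k + 1 by linarith]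

theorem Nat.Prime.coprime_twelve {p : ℕ} (hp : p.Prime) (hp3 : 3 < p) : Nat.Coprime 12 p :=
  Nat.Coprime.mul_left
    (Nat.Coprime.pow_left 2 <| (Nat.coprime_primes Nat.prime_two hp).mpr (by omega))
    ((Nat.coprime_primes Nat.prime_three hp).mpr (by omega))

theorem PadicInt.isUnit_natCast_of_prime_lt {ℓ q : ℕ} [Fact ℓ.Prime] (hq : q.Prime) (hqℓ : q < ℓ) :
    IsUnit (q : ℤ_[ℓ]) :=
  PadicInt.isUnit_iff.mpr <| PadicInt.norm_natCast_eq_one_iff.mpr <|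
    (Nat.coprime_primes Fact.out hq).mpr (by omega)

theorem exists_sq_add_cube_eq_pow {R : Type*} [CommRing R] (h2 : IsUnit (2 : R))
    (h3 : IsUnit (3 : R)) {p : ℕ} (hp : Nat.Coprime 12 p) {A B : R}
    (hΔ : IsUnit (4 * A ^ 3 + 27 * B ^ 2)) :
    ∃ (a b : R) (c u : Rˣ),
      a ^ 2 + b ^ 3 = (c : R) ^ p ∧ 2 * a = -B * u ^ 6 ∧ 3 * b = A * u ^ 4 := by
  set i2 : R := ↑h2.unit⁻¹
  set i3 : R := ↑h3.unit⁻¹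
  have hi2 : 2 * i2 = 1 := h2.mul_val_inv
  have hi3 : 3 * i3 = 1 := h3.mul_val_inv
  obtain ⟨u, c, hcu⟩ := exists_pow_eq_pow_mul hp (hΔ.unit * h2.unit⁻¹ ^ 2 * h3.unit⁻¹ ^ 3)
  refine ⟨-B * (u : R) ^ 6 * i2, A * (u : R) ^ 4 * i3, c, u, ?_, ?_, ?_⟩
  · have hcu' : (c : R) ^ p = (u : R) ^ 12 * ((4 * A ^ 3 + 27 * B ^ 2) * i2 ^ 2 * i3 ^ 3) := by
      simpa using congrArg Units.val hcu
    rw [hcu']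
    linear_combination (-(A ^ 3 * (u : R) ^ 12 * i3 ^ 3) * (2 * i2 + 1)) * hi2 +
      (-(B ^ 2 * (u : R) ^ 12 * i2 ^ 2) * (9 * i3 ^ 2 + 3 * i3 + 1)) * hi3
  · linear_combination (-B * (u : R) ^ 6) * hi2
  · linear_combination (A * (u : R) ^ 4) * hi3

theorem exists_ell_primitive_solution_good_reduction_general (ℓ p : ℕ) [Fact ℓ.Prime] (hp : p.Prime)
    (hℓ3 : ℓ > 3) (hp3 : p > 3) (A B : ℤ_[ℓ])
    (hAB : IsUnit (4 * A ^ 3 + 27 * B ^ 2)) :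
    ∃ (a b : ℤ_[ℓ]) (c u : ℤ_[ℓ]ˣ),
      a ^ 2 + b ^ 3 = (c : ℤ_[ℓ]) ^ p ∧
      PadicInt.toZMod (2 * a) = PadicInt.toZMod (-B * (u : ℤ_[ℓ]) ^ 6) ∧
      PadicInt.toZMod (3 * b) = PadicInt.toZMod (A * (u : ℤ_[ℓ]) ^ 4) := by
  have h2 : IsUnit (2 : ℤ_[ℓ]) := by
    exact_mod_cast PadicInt.isUnit_natCast_of_prime_lt Nat.prime_two (by omega)
  have h3 : IsUnit (3 : ℤ_[ℓ]) := by
    exact_mod_cast PadicInt.isUnit_natCast_of_prime_lt Nat.prime_three (by omega)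
  obtain ⟨a, b, c, u, hsol, ha, hb⟩ := exists_sq_add_cube_eq_pow h2 h3 (hp.coprime_twelve hp3) hAB
  exact ⟨a, b, c, u, hsol, congrArg _ ha, congrArg _ hb⟩

/-- Let `ℓ > 3` and `p > 3` be distinct primes and `A B : ℤ_ℓ` with `4A³ + 27B²` a unit. Then
there exist `a b : ℤ_ℓ` and units `c, u` of `ℤ_ℓ` with `a² + b³ = cᵖ`, `2a ≡ -B u⁶ (mod ℓ)`
and `3b ≡ A u⁴ (mod ℓ)`. -/
theorem exists_ell_primitive_solution_good_reduction (ℓ p : ℕ) [Fact ℓ.Prime] (hp : p.Prime)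
    (hℓ3 : ℓ > 3) (hp3 : p > 3) (hℓp : ℓ ≠ p) (A B : ℤ_[ℓ])
    (hAB : IsUnit (4 * A ^ 3 + 27 * B ^ 2)) :
    ∃ (a b : ℤ_[ℓ]) (c u : ℤ_[ℓ]ˣ),
      a ^ 2 + b ^ 3 = (c : ℤ_[ℓ]) ^ p ∧
      PadicInt.toZMod (2 * a) = PadicInt.toZMod (-B * (u : ℤ_[ℓ]) ^ 6) ∧
      PadicInt.toZMod (3 * b) = PadicInt.toZMod (A * (u : ℤ_[ℓ]) ^ 4) :=
  exists_ell_primitive_solution_good_reduction_general ℓ p hp hℓ3 hp3 A B hAB
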